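/- Let b ∈ ℝ⁷ with rank M(b) = 3. Then the linear span of the seven polynomials q₁,…,q₇ in ℝ[z₁,z₂,z₃] equals the space of all polynomials q ∈ ℝ[z₁,z₂,z₃] of total degree at most 2 that vanish identically on the baseline, i.e. satisfy q(s·v(b)) = 0 for all s ∈ ℝ. -/

import Mathlib

/-- The 3×4 camera matrix `M(b)` with rows `(1, b₁, b₂, b₃)`, `(b₄, b₅, b₆, b₇)`,
`(0, 0, 0, 1)`. -/
def Mcam (b : Fin 7 → ℝ) : Matrix (Fin 3) (Fin 4) ℝ :=
  !![1, b 0, b 1, b 2; b 3, b 4, b 5, b 6; 0, 0, 0, 1]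

/-- `v(b) = (b₂b₅ − b₁b₆, b₆ − b₂b₄, b₁b₄ − b₅)`, the direction of the baseline. -/
def vbase (b : Fin 7 → ℝ) : Fin 3 → ℝ :=
  ![b 1 * b 4 - b 0 * b 5, b 5 - b 1 * b 3, b 0 * b 3 - b 4]

open MvPolynomial in
/-- `q₁ = b₄z₁z₂ + b₅z₂² + b₆z₂z₃`. -/
noncomputable def q₁ (b : Fin 7 → ℝ) : MvPolynomial (Fin 3) ℝ :=
  C (b 3) * X 0 * X 1 + C (b 4) * X 1 ^ 2 + C (b 5) * X 1 * X 2

open MvPolynomial in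
/-- `q₂ = b₄z₁z₃ + b₅z₂z₃ + b₆z₃²`. -/
noncomputable def q₂ (b : Fin 7 → ℝ) : MvPolynomial (Fin 3) ℝ :=
  C (b 3) * X 0 * X 2 + C (b 4) * X 1 * X 2 + C (b 5) * X 2 ^ 2

open MvPolynomial in
/-- `q₃ = b₄z₁ + b₅z₂ + b₆z₃`. -/
noncomputable def q₃ (b : Fin 7 → ℝ) : MvPolynomial (Fin 3) ℝ :=
  C (b 3) * X 0 + C (b 4) * X 1 + C (b 5) * X 2

open MvPolynomial in
/-- `q₄ = z₁² + b₁z₁z₂ + b₂z₁z₃`. -/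
noncomputable def q₄ (b : Fin 7 → ℝ) : MvPolynomial (Fin 3) ℝ :=
  X 0 ^ 2 + C (b 0) * X 0 * X 1 + C (b 1) * X 0 * X 2

open MvPolynomial in
/-- `q₅ = z₁z₂ + b₁z₂² + b₂z₂z₃`. -/
noncomputable def q₅ (b : Fin 7 → ℝ) : MvPolynomial (Fin 3) ℝ :=
  X 0 * X 1 + C (b 0) * X 1 ^ 2 + C (b 1) * X 1 * X 2

open MvPolynomial in
/-- `q₆ = z₁z₃ + b₁z₂z₃ + b₂z₃²`. -/
noncomputable def q₆ (b : Fin 7 → ℝ) : MvPolynomial (Fin 3) ℝ :=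
  X 0 * X 2 + C (b 0) * X 1 * X 2 + C (b 1) * X 2 ^ 2

open MvPolynomial in
/-- `q₇ = z₁ + b₁z₂ + b₂z₃`. -/
noncomputable def q₇ (b : Fin 7 → ℝ) : MvPolynomial (Fin 3) ℝ :=
  X 0 + C (b 0) * X 1 + C (b 1) * X 2

/-!
With `u = (b₄, b₅, b₆)` and `w = (1, b₁, b₂)`, the forms `q₃` and `q₇` are the linear forms `ℓ_u`
and `ℓ_w`, and `v(b) = u × w`; rank `3` forces `v(b) ≠ 0`. Since `q(s • v)` is a polynomial in `s`
whose coefficients are the values at `v` of the homogeneous components of `q`, the condition says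
that `q` has no constant term and that its linear and quadratic parts vanish at `v`. Linear forms
vanishing at `u × w` are spanned by `ℓ_u, ℓ_w` (vector triple product). A quadratic form vanishing
at `v` lies in `H₁ · ⟨ℓ_u, ℓ_w⟩`, `H₁` being the linear forms: for a linear form `m` with
`m(v) = 1`, every product `a b` of linear forms is `a(v) b(v) m²` modulo that space. Finally
`q₁, …, q₇` are `z₂ℓ_u, z₃ℓ_u, ℓ_u, z₁ℓ_w, z₂ℓ_w, z₃ℓ_w, ℓ_w`, and the missing `z₁ℓ_u` comes from
the syzygy `ℓ_u ℓ_w = ℓ_w ℓ_u`.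
-/

open MvPolynomial Matrix

theorem mem_span_pair_of_dotProduct_cross_eq_zero {K : Type*} [Field K] {u w p : Fin 3 → K}
    (h : u ⨯₃ w ⬝ᵥ u ⨯₃ w ≠ 0) (hp : p ⬝ᵥ u ⨯₃ w = 0) : p ∈ Submodule.span K {u, w} := by
  set v := u ⨯₃ w
  -- `v ⨯₃ (p ⨯₃ v)`, expanded by both triple-product formulas
  have key : (v ⬝ᵥ v) • p = (u ⬝ᵥ p ⨯₃ v) • w - (w ⬝ᵥ p ⨯₃ v) • u := by
    rw [← cross_cross_eq_smul_sub_smul, cross_cross_eq_smul_sub_smul', hp, zero_smul, sub_zero]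
  have : (v ⬝ᵥ v) • p ∈ Submodule.span K {u, w} := by
    rw [key]
    exact Submodule.sub_mem _ (Submodule.smul_mem _ _ (Submodule.subset_span (by simp)))
      (Submodule.smul_mem _ _ (Submodule.subset_span (by simp)))
  simpa [smul_smul, inv_mul_cancel₀ h] using Submodule.smul_mem _ (v ⬝ᵥ v)⁻¹ this

namespace MvPolynomial

variable {σ R K : Type*} [CommSemiring R] [Field K]

theorem IsHomogeneous.eval_smul [Fintype σ] {φ : MvPolynomial σ R} {n : ℕ}
    (hφ : φ.IsHomogeneous n) (s : R) (v : σ → R) : eval (s • v) φ = s ^ n * eval v φ := by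
  simp only [eval_eq', Finset.mul_sum]
  refine Finset.sum_congr rfl fun d hd => ?_
  have hdeg : ∑ i, d i = n := by
    rw [← hφ (mem_support_iff.mp hd), Finsupp.weight_apply, Finsupp.sum_fintype _ _ (by simp)]
    simp
  simp only [Pi.smul_apply, smul_eq_mul, mul_pow, Finset.prod_mul_distrib,
    Finset.prod_pow_eq_pow_sum, hdeg]
  ring

theorem forall_eval_smul_eq_zero_iff [Infinite K] [Fintype σ] (p : MvPolynomial σ K)
    (v : σ → K) :
    (∀ s : K, eval (s • v) p = 0) ↔ ∀ n, eval v (homogeneousComponent n p) = 0 := by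
  set P : Polynomial K := ∑ n ∈ Finset.range (p.totalDegree + 1),
    Polynomial.monomial n (eval v (homogeneousComponent n p))
  have hP : ∀ s, eval (s • v) p = P.eval s := fun s => by
    conv_lhs => rw [← sum_homogeneousComponent p]
    simp [P, Polynomial.eval_finsetSum, (homogeneousComponent_isHomogeneous _ _).eval_smul,
      mul_comm]
  have hcoeff : ∀ n, P.coeff n = eval v (homogeneousComponent n p) := fun n => by
    simp only [P, Polynomial.finsetSum_coeff, Polynomial.coeff_monomial, Finset.sum_ite_eq',
      Finset.mem_range]
    split_ifs with h
    · rfl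
    · rw [homogeneousComponent_eq_zero _ _ (by omega), map_zero]
  simp only [hP, ← hcoeff]
  constructor
  · intro h n
    rw [Polynomial.funext (p := P) (q := 0) (by simpa using h)]
    simp
  · intro h s
    rw [show P = 0 from Polynomial.ext (by simpa using h)]
    simp

noncomputable def linearFormsVanishingAt (v : σ → R) : Submodule R (MvPolynomial σ R) :=
  homogeneousSubmodule σ R 1 ⊓ LinearMap.ker (aeval v).toLinearMap

@[simp]
theorem mem_linearFormsVanishingAt {v : σ → R} {p : MvPolynomial σ R} :
    p ∈ linearFormsVanishingAt v ↔ p.IsHomogeneous 1 ∧ eval v p = 0 := by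
  simp [linearFormsVanishingAt]

theorem mem_homogeneousSubmodule_one_mul_linearFormsVanishingAt {v : σ → K} (hv : v ≠ 0)
    {p : MvPolynomial σ K} (hp : p.IsHomogeneous 2) (hpv : eval v p = 0) :
    p ∈ homogeneousSubmodule σ K 1 * linearFormsVanishingAt v := by
  obtain ⟨i, hi⟩ : ∃ i, v i ≠ 0 := Function.ne_iff.mp hv
  set m : MvPolynomial σ K := (v i)⁻¹ • X i
  have hm : m ∈ homogeneousSubmodule σ K 1 := Submodule.smul_mem _ _ (isHomogeneous_X K i)
  have hmv : eval v m = 1 := by simp [m, hi]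
  have hsub : ∀ c ∈ homogeneousSubmodule σ K 1, c - eval v c • m ∈ linearFormsVanishingAt v :=
    fun c hc => mem_linearFormsVanishingAt.mpr
      ⟨Submodule.sub_mem _ hc (Submodule.smul_mem _ _ hm), by simp [hmv]⟩
  suffices key : ∀ q ∈ homogeneousSubmodule σ K 1 * homogeneousSubmodule σ K 1,
      q - eval v q • m ^ 2 ∈ homogeneousSubmodule σ K 1 * linearFormsVanishingAt v by
    simpa [hpv] using key p (by rwa [← pow_two, homogeneousSubmodule_one_pow])
  intro q hq
  refine Submodule.mul_induction_on hq (fun a ha b hb => ?_) (fun x y hx hy => ?_)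
  · have : a * b - eval v (a * b) • m ^ 2 =
        a * (b - eval v b • m) + (eval v b • m) * (a - eval v a • m) := by
      simp only [map_mul, smul_eq_C_mul]; ring
    rw [this]
    exact Submodule.add_mem _ (Submodule.mul_mem_mul ha (hsub b hb))
      (Submodule.mul_mem_mul (Submodule.smul_mem _ _ hm) (hsub a ha))
  · have : x + y - eval v (x + y) • m ^ 2 =
        (x - eval v x • m ^ 2) + (y - eval v y • m ^ 2) := by
      rw [map_add, add_smul]; abel
    rw [this]
    exact Submodule.add_mem _ hx hy

theorem homogeneousSubmodule_one_mul_linearFormsVanishingAt_le (v : σ → R) :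
    homogeneousSubmodule σ R 1 * linearFormsVanishingAt v ≤
      homogeneousSubmodule σ R 2 ⊓ LinearMap.ker (aeval v).toLinearMap :=
  Submodule.mul_le.mpr fun a ha ℓ hℓ =>
    ⟨ha.mul (mem_linearFormsVanishingAt.mp hℓ).1, by simp [(mem_linearFormsVanishingAt.mp hℓ).2]⟩

theorem eq_homogeneousComponent_one_add_two {q : MvPolynomial σ R} (hdeg : q.totalDegree ≤ 2)
    (h0 : coeff 0 q = 0) : q = homogeneousComponent 1 q + homogeneousComponent 2 q := by
  conv_lhs => rw [← sum_homogeneousComponent q]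
  rw [Finset.sum_subset (Finset.range_subset_range.mpr (by omega : q.totalDegree + 1 ≤ 3))
    fun n _ hn => homogeneousComponent_eq_zero _ _ (by simp at hn; omega)]
  simp [Finset.sum_range_succ, homogeneousComponent_zero, h0]

theorem coe_linearFormsVanishingAt_sup_mul [Infinite K] [Fintype σ] {v : σ → K} (hv : v ≠ 0) :
    ((linearFormsVanishingAt v ⊔ homogeneousSubmodule σ K 1 * linearFormsVanishingAt v :
        Submodule K (MvPolynomial σ K)) : Set (MvPolynomial σ K)) =
      {q | q.totalDegree ≤ 2 ∧ ∀ s : K, eval (s • v) q = 0} := by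
  ext q
  constructor
  · intro h
    obtain ⟨y, hy, z, hz, rfl⟩ := Submodule.mem_sup.mp h
    obtain ⟨hy1, hyv⟩ := mem_linearFormsVanishingAt.mp hy
    obtain ⟨hz2, hzv⟩ := homogeneousSubmodule_one_mul_linearFormsVanishingAt_le v hz
    replace hz2 : z.IsHomogeneous 2 := hz2
    replace hzv : eval v z = 0 := by simpa using hzv
    refine ⟨(totalDegree_add _ _).trans (max_le (hy1.totalDegree_le.trans (by norm_num))
      hz2.totalDegree_le), fun s => ?_⟩
    rw [map_add, hy1.eval_smul, hz2.eval_smul, hyv, hzv, mul_zero, mul_zero, add_zero]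
  · rintro ⟨hdeg, hq⟩
    have hc := (forall_eval_smul_eq_zero_iff q v).mp hq
    have h0 : coeff 0 q = 0 := by simpa [homogeneousComponent_zero] using hc 0
    rw [SetLike.mem_coe, eq_homogeneousComponent_one_add_two hdeg h0]
    exact Submodule.add_mem_sup
      (mem_linearFormsVanishingAt.mpr ⟨homogeneousComponent_isHomogeneous 1 q, hc 1⟩)
      (mem_homogeneousSubmodule_one_mul_linearFormsVanishingAt hv
        (homogeneousComponent_isHomogeneous 2 q) (hc 2))

theorem eval_linearCombination_X [Fintype σ] (c v : σ → R) :
    eval v (Fintype.linearCombination R X c) = c ⬝ᵥ v := by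
  simp [Fintype.linearCombination_apply, dotProduct]

theorem linearFormsVanishingAt_cross {u w : Fin 3 → K} (h : u ⨯₃ w ⬝ᵥ u ⨯₃ w ≠ 0) :
    linearFormsVanishingAt (u ⨯₃ w) =
      Submodule.span K {Fintype.linearCombination K X u, Fintype.linearCombination K X w} := by
  have hrange : LinearMap.range (Fintype.linearCombination K (X : Fin 3 → MvPolynomial _ K)) =
      homogeneousSubmodule (Fin 3) K 1 := by
    rw [Fintype.range_linearCombination, homogeneousSubmodule_one_eq_span_X]
  apply le_antisymm
  · intro p hp
    obtain ⟨hp1, hpv⟩ := mem_linearFormsVanishingAt.mp hp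
    obtain ⟨c, rfl⟩ : p ∈ LinearMap.range _ := hrange ▸ (mem_homogeneousSubmodule 1 p).mpr hp1
    rw [eval_linearCombination_X] at hpv
    rw [← Set.image_pair, ← Submodule.map_span]
    exact Submodule.mem_map_of_mem (mem_span_pair_of_dotProduct_cross_eq_zero h hpv)
  · rw [Submodule.span_le, Set.insert_subset_iff, Set.singleton_subset_iff]
    refine ⟨mem_linearFormsVanishingAt.mpr ⟨?_, ?_⟩, mem_linearFormsVanishingAt.mpr ⟨?_, ?_⟩⟩
    · exact (mem_homogeneousSubmodule 1 _).mp (hrange ▸ LinearMap.mem_range_self _ u)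
    · rw [eval_linearCombination_X, dot_self_cross]
    · exact (mem_homogeneousSubmodule 1 _).mp (hrange ▸ LinearMap.mem_range_self _ w)
    · rw [eval_linearCombination_X, dot_cross_self]

end MvPolynomial

theorem vbase_eq_cross (b : Fin 7 → ℝ) : vbase b = ![b 3, b 4, b 5] ⨯₃ ![1, b 0, b 1] := by
  ext i
  fin_cases i <;> simp [vbase, cross_apply] <;> ring

theorem q₃_eq_linearCombination (b : Fin 7 → ℝ) :
    q₃ b = Fintype.linearCombination ℝ X ![b 3, b 4, b 5] := by
  simp [q₃, Fintype.linearCombination_apply, Fin.sum_univ_three, smul_eq_C_mul]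

theorem q₇_eq_linearCombination (b : Fin 7 → ℝ) :
    q₇ b = Fintype.linearCombination ℝ X ![1, b 0, b 1] := by
  simp [q₇, Fintype.linearCombination_apply, Fin.sum_univ_three, smul_eq_C_mul]

theorem vbase_ne_zero_of_rank_eq_three {b : Fin 7 → ℝ} (hrank : (Mcam b).rank = 3) :
    vbase b ≠ 0 := by
  have hli : LinearIndependent ℝ (Mcam b).row := by
    rw [linearIndependent_iff_card_eq_finrank_span, Set.finrank, ← rank_eq_finrank_span_row,
      hrank, Fintype.card_fin]
  intro hv
  have hrel : ∑ i, ![b 3, -1, b 6 - b 2 * b 3] i • (Mcam b).row i = 0 := by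
    have h1 : b 5 - b 1 * b 3 = 0 := congrFun hv 1
    have h2 : b 0 * b 3 - b 4 = 0 := congrFun hv 2
    ext j
    fin_cases j <;> simp [Fin.sum_univ_three, Mcam] <;> linarith
  simpa using Fintype.linearIndependent_iff.mp hli _ hrel 1

theorem span_q_eq_sup_mul (b : Fin 7 → ℝ) :
    Submodule.span ℝ {q₁ b, q₂ b, q₃ b, q₄ b, q₅ b, q₆ b, q₇ b} =
      Submodule.span ℝ {q₃ b, q₇ b} ⊔
        homogeneousSubmodule (Fin 3) ℝ 1 * Submodule.span ℝ {q₃ b, q₇ b} := by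
  have h₁ : q₁ b = X 1 * q₃ b := by simp only [q₁, q₃]; ring
  have h₂ : q₂ b = X 2 * q₃ b := by simp only [q₂, q₃]; ring
  have h₄ : q₄ b = X 0 * q₇ b := by simp only [q₄, q₇]; ring
  have h₅ : q₅ b = X 1 * q₇ b := by simp only [q₅, q₇]; ring
  have h₆ : q₆ b = X 2 * q₇ b := by simp only [q₆, q₇]; ring
  -- from the syzygy `q₃ q₇ = q₇ q₃`, using that `q₇` has leading coefficient `1`
  have h₀ : X 0 * q₃ b = b 3 • q₄ b + b 4 • q₅ b + b 5 • q₆ b - b 0 • q₁ b - b 1 • q₂ b := by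
    simp only [q₁, q₂, q₃, q₄, q₅, q₆, smul_eq_C_mul]; ring
  apply le_antisymm
  · set L := Submodule.span ℝ {q₃ b, q₇ b}
    have hL : ∀ ℓ ∈ ({q₃ b, q₇ b} : Set _), ℓ ∈ L ⊔ homogeneousSubmodule (Fin 3) ℝ 1 * L :=
      fun ℓ hℓ => Submodule.mem_sup_left (Submodule.subset_span hℓ)
    have hXL : ∀ i, ∀ ℓ ∈ ({q₃ b, q₇ b} : Set _),
        X i * ℓ ∈ L ⊔ homogeneousSubmodule (Fin 3) ℝ 1 * L := fun i ℓ hℓ =>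
      Submodule.mem_sup_right (Submodule.mul_mem_mul (isHomogeneous_X ℝ i)
        (Submodule.subset_span hℓ))
    rw [Submodule.span_le]
    simp only [Set.insert_subset_iff, Set.singleton_subset_iff, SetLike.mem_coe, h₁, h₂, h₄, h₅,
      h₆]
    refine ⟨hXL 1 _ ?_, hXL 2 _ ?_, hL _ ?_, hXL 0 _ ?_, hXL 1 _ ?_, hXL 2 _ ?_, hL _ ?_⟩ <;>
      simp
  · refine sup_le (Submodule.span_mono (by simp [Set.insert_subset_iff])) ?_
    rw [homogeneousSubmodule_one_eq_span_X, Submodule.span_mul_span, Submodule.span_le]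
    rintro _ ⟨_, ⟨i, rfl⟩, ℓ, hℓ, rfl⟩
    rcases hℓ with rfl | rfl <;> fin_cases i
    all_goals
      simp only [Fin.zero_eta, Fin.mk_one, Fin.reduceFinMk, SetLike.mem_coe, ← h₁, ← h₂, ← h₄,
        ← h₅, ← h₆, h₀]
    · have mem : ∀ q ∈ ({q₁ b, q₂ b, q₃ b, q₄ b, q₅ b, q₆ b, q₇ b} : Set _),
          ∀ c : ℝ, c • q ∈ Submodule.span ℝ {q₁ b, q₂ b, q₃ b, q₄ b, q₅ b, q₆ b, q₇ b} :=
        fun q hq c => Submodule.smul_mem _ c (Submodule.subset_span hq)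
      exact Submodule.sub_mem _ (Submodule.sub_mem _ (Submodule.add_mem _ (Submodule.add_mem _
        (mem _ (by simp) _) (mem _ (by simp) _)) (mem _ (by simp) _)) (mem _ (by simp) _))
        (mem _ (by simp) _)
    all_goals exact Submodule.subset_span (by simp)

/-- If `rank M(b) = 3`, the linear span of `q₁, …, q₇` equals the space of all
polynomials of total degree at most 2 vanishing identically on the baseline
(the line through the origin with direction `v(b)`). -/
theorem baseline_polynomials_span
    (b : Fin 7 → ℝ) (hrank : (Mcam b).rank = 3) :
    (Submodule.span ℝ
        ({q₁ b, q₂ b, q₃ b, q₄ b, q₅ b, q₆ b, q₇ b} : Set (MvPolynomial (Fin 3) ℝ)) :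
        Set (MvPolynomial (Fin 3) ℝ)) =
      {q : MvPolynomial (Fin 3) ℝ |
        q.totalDegree ≤ 2 ∧ ∀ s : ℝ, MvPolynomial.eval (s • vbase b) q = 0} := by
  have hv : vbase b ≠ 0 := vbase_ne_zero_of_rank_eq_three hrank
  have hN : linearFormsVanishingAt (vbase b) = Submodule.span ℝ {q₃ b, q₇ b} := by
    have hcross : vbase b ⬝ᵥ vbase b ≠ 0 := mt dotProduct_self_eq_zero.mp hv
    rw [vbase_eq_cross] at hcross ⊢
    rw [linearFormsVanishingAt_cross hcross, q₃_eq_linearCombination, q₇_eq_linearCombination]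
  rw [span_q_eq_sup_mul, ← hN, coe_linearFormsVanishingAt_sup_mul hv]
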